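/- Let Z be Hermitian positive definite, w ≠ 0, and for u with u* w ≠ 0 define SINR(u) = (ρ α'² |u* w|²)/(ρ α² |u* w|² + u* Z u), with ρ, α, α' > 0. Then the supremum of SINR(u) over such u equals ρ α'² / (ρ α² + (w* Z⁻¹ w)⁻¹). -/

import Mathlib

open Matrix ComplexOrder

/-!
Cauchy–Schwarz for the inner product `⟪x, y⟫ = x* Z y` gives
`|u* w|² = |⟪u, Z⁻¹ w⟫|² ≤ (u* Z u) (w* Z⁻¹ w)`. Since
`SINR(u) = ρα'² / (ρα² + u* Z u / |u* w|²)`, this bounds `SINR` by the claimed value,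
which is attained at `u = Z⁻¹ w`, where both `u* w` and `u* Z u` equal `w* Z⁻¹ w`.
-/

theorem mul_div_mul_add_eq_div_add_div {𝕜 : Type*} [Field 𝕜] {P K a b : 𝕜} (ha : a ≠ 0) :
    P * a / (K * a + b) = P / (K + b / a) := by
  rw [add_div' _ _ _ ha, div_div_eq_mul_div]

namespace Matrix

variable {n 𝕜 : Type*} [Fintype n]

theorem mulVec_nonsing_inv_mulVec [DecidableEq n] [CommRing 𝕜] {M : Matrix n n 𝕜}
    (hM : IsUnit M.det) (w : n → 𝕜) : M *ᵥ (M⁻¹ *ᵥ w) = w := by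
  rw [mulVec_mulVec, mul_nonsing_inv _ hM, one_mulVec]

theorem IsHermitian.star_mulVec_dotProduct [CommRing 𝕜] [StarRing 𝕜] {M : Matrix n n 𝕜}
    (hM : M.IsHermitian) (v w : n → 𝕜) : star (M *ᵥ v) ⬝ᵥ w = star v ⬝ᵥ M *ᵥ w := by
  rw [star_mulVec, hM.eq, dotProduct_mulVec]

variable [RCLike 𝕜]

theorem PosSemidef.norm_dotProduct_mulVec_sq_le {M : Matrix n n 𝕜} (hM : M.PosSemidef)
    (x y : n → 𝕜) :
    ‖star x ⬝ᵥ M *ᵥ y‖ ^ 2 ≤ RCLike.re (star x ⬝ᵥ M *ᵥ x) * RCLike.re (star y ⬝ᵥ M *ᵥ y) := by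
  let _ := M.toSeminormedAddCommGroup hM
  let _ := M.toInnerProductSpace hM
  have h := inner_mul_inner_self_le (𝕜 := 𝕜) x y
  rw [norm_inner_symm y x, ← sq] at h
  simp only [dotProduct_comm (star _)]
  exact h

variable [DecidableEq n] {M : Matrix n n 𝕜}

theorem PosDef.isUnit_det (hM : M.PosDef) : IsUnit M.det :=
  (isUnit_iff_isUnit_det M).mp hM.isUnit

theorem PosDef.star_inv_mulVec_dotProduct_mulVec (hM : M.PosDef) (w : n → 𝕜) :
    star (M⁻¹ *ᵥ w) ⬝ᵥ M *ᵥ (M⁻¹ *ᵥ w) = star w ⬝ᵥ M⁻¹ *ᵥ w := by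
  rw [mulVec_nonsing_inv_mulVec hM.isUnit_det, hM.inv.isHermitian.star_mulVec_dotProduct]

theorem PosDef.norm_star_dotProduct_sq_le (hM : M.PosDef) (u w : n → 𝕜) :
    ‖star u ⬝ᵥ w‖ ^ 2 ≤ RCLike.re (star u ⬝ᵥ M *ᵥ u) * RCLike.re (star w ⬝ᵥ M⁻¹ *ᵥ w) := by
  have h := hM.posSemidef.norm_dotProduct_mulVec_sq_le u (M⁻¹ *ᵥ w)
  rwa [hM.star_inv_mulVec_dotProduct_mulVec, mulVec_nonsing_inv_mulVec hM.isUnit_det] at h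

end Matrix

theorem stmt8_general (N : ℕ) (Z : Matrix (Fin N) (Fin N) ℂ) (hZ : Z.PosDef)
    (w : Fin N → ℂ) (hw : w ≠ 0) (ρ α α' : ℝ) (hρ : 0 < ρ) :
    IsGreatest {r : ℝ | ∃ u : Fin N → ℂ, star u ⬝ᵥ w ≠ 0 ∧
        r = ρ * α' ^ 2 * ‖star u ⬝ᵥ w‖ ^ 2 /
              (ρ * α ^ 2 * ‖star u ⬝ᵥ w‖ ^ 2 + (star u ⬝ᵥ Z *ᵥ u).re)}
      (ρ * α' ^ 2 / (ρ * α ^ 2 + ((star w ⬝ᵥ Z⁻¹ *ᵥ w).re)⁻¹)) := by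
  set c := (star w ⬝ᵥ Z⁻¹ *ᵥ w).re
  have hc : 0 < c := hZ.inv.re_dotProduct_pos hw
  have hc_eq : star w ⬝ᵥ Z⁻¹ *ᵥ w = c :=
    Complex.eq_re_of_ofReal_le (Complex.ofReal_zero ▸ (hZ.inv.dotProduct_mulVec_pos hw).le)
  set v := Z⁻¹ *ᵥ w
  have hvw : star v ⬝ᵥ w = c := by
    rw [hZ.inv.isHermitian.star_mulVec_dotProduct, hc_eq]
  have hvZv : star v ⬝ᵥ Z *ᵥ v = c := by
    rw [hZ.star_inv_mulVec_dotProduct_mulVec, hc_eq]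
  refine ⟨⟨v, by simp [hvw, hc.ne'], ?_⟩, ?_⟩
  · rw [hvw, hvZv, Complex.norm_real, Real.norm_of_nonneg hc.le, Complex.ofReal_re,
      mul_div_mul_add_eq_div_add_div (by positivity), sq c, div_mul_cancel_left₀ hc.ne']
  · rintro _ ⟨u, hu, rfl⟩
    have ha : 0 < ‖star u ⬝ᵥ w‖ ^ 2 := by positivity
    have hcs : ‖star u ⬝ᵥ w‖ ^ 2 ≤ (star u ⬝ᵥ Z *ᵥ u).re * c :=
      hZ.norm_star_dotProduct_sq_le u w
    rw [mul_div_mul_add_eq_div_add_div ha.ne']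
    gcongr
    rwa [le_div_iff₀ ha, inv_mul_le_iff₀ hc, mul_comm c]

/-- For Hermitian positive definite `Z`, nonzero `w`, and
`SINR(u) = ρα'²|u* w|²/(ρα²|u* w|² + u* Z u)` over `u` with `u* w ≠ 0`,
the supremum (in fact maximum) equals `ρα'²/(ρα² + (w* Z⁻¹ w)⁻¹)`. -/
theorem stmt8 (N : ℕ) (Z : Matrix (Fin N) (Fin N) ℂ) (hZ : Z.PosDef)
    (w : Fin N → ℂ) (hw : w ≠ 0) (ρ α α' : ℝ) (hρ : 0 < ρ) (hα : 0 < α) (hα' : 0 < α') :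
    IsGreatest {r : ℝ | ∃ u : Fin N → ℂ, star u ⬝ᵥ w ≠ 0 ∧
        r = ρ * α' ^ 2 * ‖star u ⬝ᵥ w‖ ^ 2 /
              (ρ * α ^ 2 * ‖star u ⬝ᵥ w‖ ^ 2 + (star u ⬝ᵥ Z *ᵥ u).re)}
      (ρ * α' ^ 2 / (ρ * α ^ 2 + ((star w ⬝ᵥ Z⁻¹ *ᵥ w).re)⁻¹)) :=
  stmt8_general N Z hZ w hw ρ α α' hρ
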